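/- arXiv:2103.04707 — 3 statements merged into one kernel-verified Lean document; each statement's English description precedes it below -/
import Mathlib

section
/- Let S be a standard Young tableau of shape λ and let v be its column reading word. Then applying the RSK row insertion algorithm to v yields insertion tableau equal to S. -/
namespace RSKPaper

/-- The shape of a tableau: the list of row lengths (rows stored bottom-to-top,
French convention, so the shape is weakly decreasing). -/
def shape (T : List (List ℕ)) : List ℕ := T.map List.length

/-- The conjugate (transpose) of a partition given as a weakly decreasing list. -/
def conj (l : List ℕ) : List ℕ :=
  (List.range (l.headD 0)).map (fun j => l.countP (fun x => decide (j < x)))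

/-- A weakly decreasing list of positive integers. -/
def IsPartitionList (l : List ℕ) : Prop :=
  l.Pairwise (· ≥ ·) ∧ ∀ x ∈ l, 0 < x

/-- A standard Young tableau, rows stored bottom-to-top (French convention):
partition shape, rows strictly increasing, columns strictly increasing upwards,
and the entries are exactly 1,...,n. -/
def IsSYT (T : List (List ℕ)) : Prop :=
  IsPartitionList (shape T) ∧
  (∀ r ∈ T, r.Pairwise (· < ·)) ∧
  (∀ i j, i + 1 < T.length → j < (T.getD (i+1) []).length →
    (T.getD i []).getD j 0 < (T.getD (i+1) []).getD j 0) ∧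
  T.flatten.Perm (List.range' 1 T.flatten.length)

/-- Schensted row insertion of a single letter into a tableau. -/
def insertTab : List (List ℕ) → ℕ → List (List ℕ)
  | [], a => [[a]]
  | r :: rs, a =>
    match r.findIdx? (fun b => decide (a < b)) with
    | none => (r ++ [a]) :: rs
    | some i => (r.set i a) :: insertTab rs (r.getD i 0)

/-- The insertion tableau of a word. -/
def insertWord (w : List ℕ) : List (List ℕ) := w.foldl insertTab []

/-- The index of the row where the shape grew. -/
def growthRow (P P' : List (List ℕ)) : ℕ :=
  (List.range P'.length).findIdx
    (fun i => decide ((P.getD i []).length ≠ (P'.getD i []).length))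

/-- Add a box labelled `k` at the end of row `r` of the recording tableau. -/
def addBox (Q : List (List ℕ)) (r k : ℕ) : List (List ℕ) :=
  if r < Q.length then Q.set r (Q.getD r [] ++ [k]) else Q ++ [[k]]

def RSKaux : List ℕ → ℕ → List (List ℕ) × List (List ℕ) → List (List ℕ) × List (List ℕ)
  | [], _, pq => pq
  | a :: rest, k, (P, Q) =>
      let P' := insertTab P a
      RSKaux rest (k+1) (P', addBox Q (growthRow P P') k)

/-- The RSK correspondence: insertion and recording tableaux of a word. -/
def RSK (w : List ℕ) : List (List ℕ) × List (List ℕ) := RSKaux w 1 ([], [])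

/-- Row reading word: rows top to bottom, left to right. -/
def readingWord (T : List (List ℕ)) : List ℕ := T.reverse.flatten

/-- Column reading word: columns left to right, each read top to bottom. -/
def columnWord (T : List (List ℕ)) : List ℕ :=
  (List.range (T.headD []).length).flatMap
    (fun j => T.reverse.filterMap (fun row => row[j]?))

/-- Transpose of a tableau: column `j` (bottom to top) becomes row `j`. -/
def transposeTab (T : List (List ℕ)) : List (List ℕ) :=
  (List.range (T.headD []).length).map
    (fun j => T.filterMap (fun row => row[j]?))

/-- The inverse of a permutation written as a word on 1,...,n. -/
def invWord (w : List ℕ) : List ℕ :=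
  (List.range w.length).map (fun i => w.findIdx (fun x => decide (x = i+1)) + 1)

/-- Convert a list of columns (each bottom-to-top) into a list of `k` rows. -/
def rowsOfCols (cols : List (List ℕ)) (k : ℕ) : List (List ℕ) :=
  (List.range k).map (fun i => cols.filterMap (fun c => (c)[i]?))

/-- The columns of the tableau `T_λ`: process the rows of `λ` from shortest to
longest; at each stage drop the next consecutive integers into the bottommost
empty cells of the first `λ_{k-t+1}` columns, left to right. -/
def colsOfT (l : List ℕ) : List (List ℕ) :=
  (l.reverse.foldl
    (fun (st : List (List ℕ) × ℕ) len =>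
      (st.1.mapIdx (fun j col => if j < len then col ++ [st.2 + j] else col), st.2 + len))
    ((List.replicate (l.headD 0) ([] : List ℕ)), 1)).1

/-- The tableau `T_λ` of Lemma 3.3. -/
def Tlam (l : List ℕ) : List (List ℕ) := rowsOfCols (colsOfT l) l.length

/-- The tableau `Q_λ`: columns filled consecutively with `1,…,n` from bottom to
top, left column first. -/
def Qlam (l : List ℕ) : List (List ℕ) :=
  rowsOfCols
    ((List.range (conj l).length).map (fun j =>
      (List.range ((conj l).getD j 0)).map (fun i => ((conj l).take j).sum + i + 1)))
    l.length

/-- The map `f`: row reading word of the recording tableau. -/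
def f (w : List ℕ) : List ℕ := readingWord (RSK w).2

/-- The map `c`: column reading word of the recording tableau. -/
def c (w : List ℕ) : List ℕ := columnWord (RSK w).2

/-- The map `r`: reversed row reading word of the recording tableau. -/
def r (w : List ℕ) : List ℕ := (readingWord (RSK w).2).reverse

/-- `s` is `k`-increasing: it contains no decreasing subsequence of length `k+1`. -/
def IsKIncreasing (k : ℕ) (s : List ℕ) : Prop :=
  ∀ d : List ℕ, d.Sublist s → d.Pairwise (· > ·) → d.length ≤ k

/-- `s` is `k`-decreasing: it contains no increasing subsequence of length `k+1`. -/
def IsKDecreasing (k : ℕ) (s : List ℕ) : Prop :=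
  ∀ d : List ℕ, d.Sublist s → d.Pairwise (· < ·) → d.length ≤ k

/-- `I_k(w)`: the maximum length of a `k`-increasing subsequence of `w`. -/
noncomputable def Ik (k : ℕ) (w : List ℕ) : ℕ :=
  sSup {m | ∃ s : List ℕ, s.Sublist w ∧ IsKIncreasing k s ∧ s.length = m}

/-- `D_k(w)`: the maximum length of a `k`-decreasing subsequence of `w`. -/
noncomputable def Dk (k : ℕ) (w : List ℕ) : ℕ :=
  sSup {m | ∃ s : List ℕ, s.Sublist w ∧ IsKDecreasing k s ∧ s.length = m}

end RSKPaper

/-!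
Inserting an increasing sequence `c₀ < c₁ < ⋯ < cₘ` in the order `cₘ, …, c₀` into a
tableau whose row `t` lies entirely below `cₜ` attaches it as a new rightmost column: each
new, smaller letter lands at the end of the bottom row and bumps the part of the column
inserted so far up by one row. The column reading word of `S` feeds the columns of `S` to
the insertion exactly in this way, from left to right, so `S` is rebuilt column by column.
-/

namespace RSKPaper

def column (j : ℕ) (T : List (List ℕ)) : List ℕ := T.filterMap (·[j]?)

def attachCol (A : List (List ℕ)) : List ℕ → List (List ℕ)
  | [] => A
  | b :: col => (A.headD [] ++ [b]) :: attachCol A.tail col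

lemma insertTab_attachCol (A : List (List ℕ)) (col : List ℕ) (a : ℕ)
    (hsorted : (a :: col).Pairwise (· < ·))
    (hA : ∀ t (ht : t < (a :: col).length), ∀ x ∈ A.getD t [], x < (a :: col)[t]) :
    insertTab (attachCol A col) a = attachCol A (a :: col) := by
  induction col generalizing A a with
  | nil =>
    rcases A with _ | ⟨r, A⟩
    · rfl
    · have hr : r.findIdx? (fun x => decide (a < x)) = none := by
        simpa [List.findIdx?_eq_none_iff] using fun x hx => (hA 0 (by simp) x hx).le
      simp [attachCol, insertTab, hr]
  | cons b col ih =>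
    set r := A.headD [] with hr_def
    have hr : ∀ x ∈ r, x < a := by
      rcases A with _ | ⟨r, A⟩
      · simp [hr_def]
      · exact hA 0 (by simp)
    have hab : a < b := List.rel_of_pairwise_cons hsorted (by simp)
    have hfind : (r ++ [b]).findIdx? (fun x => decide (a < x)) = some r.length := by
      have : r.findIdx? (fun x => decide (a < x)) = none := by
        simpa [List.findIdx?_eq_none_iff] using fun x hx => (hr x hx).le
      simp [List.findIdx?_append, this, hab]
    have htail : insertTab (attachCol A.tail col) b = attachCol A.tail (b :: col) := by
      refine ih A.tail b hsorted.of_cons fun t ht x hx => ?_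
      rcases A with _ | ⟨r, A⟩
      · simp at hx
      · have := hA (t + 1) (by simpa using ht) x (by simpa using hx)
        rwa [List.getElem_cons_succ] at this
    show insertTab ((r ++ [b]) :: attachCol A.tail col) a =
      (r ++ [a]) :: attachCol A.tail (b :: col)
    simp only [insertTab, hfind, ← htail]
    simp

lemma foldl_insertTab_reverse (A : List (List ℕ)) (col : List ℕ)
    (hsorted : col.Pairwise (· < ·))
    (hA : ∀ t (ht : t < col.length), ∀ x ∈ A.getD t [], x < col[t]) :
    col.reverse.foldl insertTab A = attachCol A col := by
  induction col with
  | nil => rfl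
  | cons a col ih =>
    have hA' : ∀ t (ht : t < col.length), ∀ x ∈ A.getD t [], x < col[t] := fun t ht x hx =>
      (hA t (by simp; omega) x hx).trans <| List.pairwise_iff_getElem.mp hsorted t (t + 1)
        (by simp; omega) (by simpa using ht) (by omega)
    rw [List.reverse_cons, List.foldl_append, ih hsorted.of_cons hA']
    exact insertTab_attachCol A col a hsorted hA

lemma length_le_of_mem_cons {r s : List ℕ} {T : List (List ℕ)}
    (hshape : (r :: T).Pairwise (fun r s => s.length ≤ r.length)) (hs : s ∈ r :: T) :
    s.length ≤ r.length := by
  rcases List.mem_cons.mp hs with rfl | hs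
  · exact le_rfl
  · exact List.rel_of_pairwise_cons hshape hs

lemma map_take_eq_self {T : List (List ℕ)} {k : ℕ} (h : ∀ s ∈ T, s.length ≤ k) :
    T.map (·.take k) = T :=
  (List.map_congr_left fun s hs => List.take_of_length_le (h s hs)).trans (List.map_id _)

lemma column_cons_of_lt {r : List ℕ} {k : ℕ} (T : List (List ℕ)) (h : k < r.length) :
    column k (r :: T) = r[k] :: column k T := by
  simp [column, h]

lemma column_cons_eq_nil {r : List ℕ} {T : List (List ℕ)} {k : ℕ}
    (hshape : (r :: T).Pairwise (fun r s => s.length ≤ r.length)) (h : r.length ≤ k) :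
    column k (r :: T) = [] := by
  simp only [column, List.filterMap_eq_nil_iff, List.getElem?_eq_none_iff]
  exact fun s hs => (length_le_of_mem_cons hshape hs).trans h

lemma attachCol_map_take (T : List (List ℕ)) (k : ℕ)
    (hshape : T.Pairwise (fun r s => s.length ≤ r.length)) :
    attachCol (T.map (·.take k)) (column k T) = T.map (·.take (k + 1)) := by
  induction T with
  | nil => rfl
  | cons r T ih =>
    by_cases hk : k < r.length
    · rw [column_cons_of_lt T hk, List.map_cons, List.map_cons, ← ih hshape.of_cons]
      simp [attachCol]
    · have hlen : ∀ s ∈ r :: T, s.length ≤ k := fun s hs =>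
        (length_le_of_mem_cons hshape hs).trans (by omega)
      rw [column_cons_eq_nil hshape (by omega), attachCol, map_take_eq_self hlen,
        map_take_eq_self fun s hs => (hlen s hs).trans k.le_succ]

lemma attachCol_nil_column_zero (T : List (List ℕ)) (hne : ∀ r ∈ T, r ≠ []) :
    attachCol [] (column 0 T) = T.map (·.take 1) := by
  induction T with
  | nil => rfl
  | cons r T ih =>
    obtain ⟨a, r, rfl⟩ := List.exists_cons_of_ne_nil (hne _ List.mem_cons_self)
    simp [column_cons_of_lt, attachCol, ← ih fun s hs => hne s (List.mem_cons_of_mem _ hs)]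

lemma pairwise_lt_column (T : List (List ℕ)) (k : ℕ)
    (hshape : T.Pairwise (fun r s => s.length ≤ r.length))
    (hcol : ∀ i j, i + 1 < T.length → j < (T.getD (i+1) []).length →
      (T.getD i []).getD j 0 < (T.getD (i+1) []).getD j 0) :
    (column k T).Pairwise (· < ·) := by
  rw [← List.isChain_iff_pairwise]
  induction T with
  | nil => exact .nil
  | cons r T ih =>
    by_cases hk : k < r.length
    · rw [column_cons_of_lt T hk, List.isChain_cons]
      refine ⟨fun y hy => ?_, ih hshape.of_cons fun i j hi hj => by
        simpa using hcol (i + 1) j (by simpa using hi) (by simpa using hj)⟩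
      rcases T with _ | ⟨s, T⟩
      · simp [column] at hy
      · by_cases hs : k < s.length
        · rw [column_cons_of_lt T hs, List.head?_cons, Option.mem_some_iff] at hy
          subst hy
          simpa [hk, hs] using hcol 0 k (by simp) (by simpa using hs)
        · rw [column_cons_eq_nil hshape.of_cons (by omega)] at hy
          simp at hy
    · rw [column_cons_eq_nil hshape (by omega)]
      exact .nil

lemma mem_take_lt_column (T : List (List ℕ)) (k : ℕ)
    (hshape : T.Pairwise (fun r s => s.length ≤ r.length))
    (hrows : ∀ r ∈ T, r.Pairwise (· < ·)) :
    ∀ t (ht : t < (column k T).length), ∀ x ∈ (T.map (·.take k)).getD t [],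
      x < (column k T)[t] := by
  induction T with
  | nil => simp [column]
  | cons r T ih =>
    by_cases hk : k < r.length
    · rw [column_cons_of_lt T hk]
      rintro (_ | t) ht x hx
      · obtain ⟨j, hj, rfl⟩ := List.mem_take_iff_getElem.mp (by simpa using hx)
        exact List.pairwise_iff_getElem.mp (hrows r List.mem_cons_self) j k _ hk (by omega)
      · simpa using ih hshape.of_cons (fun s hs => hrows s (List.mem_cons_of_mem _ hs)) t
          (by simpa using ht) x (by simpa using hx)
    · rw [column_cons_eq_nil hshape (by omega)]
      simp

lemma columnWord_eq_flatMap (T : List (List ℕ)) :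
    columnWord T = (List.range (T.headD []).length).flatMap fun j => (column j T).reverse := by
  simp only [columnWord, column, List.filterMap_reverse]

lemma insertWord_flatMap_range_column (T : List (List ℕ)) (k : ℕ)
    (hshape : T.Pairwise (fun r s => s.length ≤ r.length)) (hne : ∀ r ∈ T, r ≠ [])
    (hrows : ∀ r ∈ T, r.Pairwise (· < ·))
    (hcol : ∀ i j, i + 1 < T.length → j < (T.getD (i+1) []).length →
      (T.getD i []).getD j 0 < (T.getD (i+1) []).getD j 0) :
    insertWord ((List.range (k + 1)).flatMap fun j => (column j T).reverse) =
      T.map (·.take (k + 1)) := by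
  induction k with
  | zero =>
    rw [insertWord, List.range_one, List.flatMap_singleton,
      foldl_insertTab_reverse _ _ (pairwise_lt_column T 0 hshape hcol) (by simp),
      attachCol_nil_column_zero T hne]
  | succ k ih =>
    rw [insertWord, List.range_succ, List.flatMap_append, List.foldl_append, ← insertWord, ih,
      List.flatMap_singleton, foldl_insertTab_reverse _ _ (pairwise_lt_column T _ hshape hcol)
        (mem_take_lt_column T _ hshape hrows), attachCol_map_take T _ hshape]

end RSKPaper

open RSKPaper in
theorem insert_columnWord_general (S : List (List ℕ))
    (hS : IsSYT S) :
    insertWord (columnWord S) = S := by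
  obtain ⟨⟨hshape, hpos⟩, hrows, hcol, -⟩ := hS
  have hshape' : S.Pairwise (fun r s => s.length ≤ r.length) := List.pairwise_map.mp hshape
  have hne : ∀ r ∈ S, r ≠ [] := fun r hr =>
    List.ne_nil_of_length_pos (hpos _ (List.mem_map_of_mem hr))
  rcases S with _ | ⟨r, S⟩
  · rfl
  obtain ⟨k, hk⟩ : ∃ k, r.length = k + 1 :=
    Nat.exists_eq_add_one.mpr (List.length_pos_iff.mpr (hne r List.mem_cons_self))
  rw [columnWord_eq_flatMap, List.headD_cons, hk,
    insertWord_flatMap_range_column _ k hshape' hne hrows hcol,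
    map_take_eq_self fun s hs => (length_le_of_mem_cons hshape' hs).trans hk.le]

open RSKPaper in
/-- Row-inserting the column reading word of a standard Young tableau `S`
reproduces `S` as the insertion tableau. -/
theorem insert_columnWord (S : List (List ℕ)) (lam : List ℕ)
    (hS : IsSYT S) (hshape : shape S = lam) :
    insertWord (columnWord S) = S :=
  insert_columnWord_general S hS
end

section
/- Let T be a standard Young tableau of shape λ with row reading word w, and let w' be the reversal of w. Then the insertion tableau of RSK applied to w' equals the transpose tableau T' (of shape λ', the conjugate of λ). -/
/-! Read from the bottom row up, the reversed reading word lists every row of `T` in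
decreasing order. Suppose the rows inserted so far have produced the transpose of the rows
below the next row `b₀ < b₁ < ⋯ < bₘ`; its row `t` is column `t` of `T`, which lies entirely
below `bₜ`. Inserting `bₘ, …, b₁, b₀` in turn, each new `bₜ` lands at the end of row `t` and
bumps `bₜ₊₁` to the end of row `t + 1`, so the new row of `T` becomes a new column of the
transpose. -/

namespace RSKPaper

/-- Append the column `bs` (read bottom to top) on the right of the tableau `P`:
`bs[t]` goes at the end of row `t`, starting new rows where `P` has none. -/
def pushColumn : List (List ℕ) → List ℕ → List (List ℕ)
  | P, [] => P
  | P, b :: bs => (P.headD [] ++ [b]) :: pushColumn P.tail bs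

theorem length_pushColumn (P : List (List ℕ)) (bs : List ℕ) :
    (pushColumn P bs).length = max P.length bs.length := by
  induction bs generalizing P with
  | nil => simp [pushColumn]
  | cons b bs ih => cases P <;> simp [pushColumn, ih]

theorem getD_pushColumn (P : List (List ℕ)) (bs : List ℕ) (t : ℕ) :
    (pushColumn P bs).getD t [] = P.getD t [] ++ bs[t]?.toList := by
  induction bs generalizing P t with
  | nil => simp [pushColumn]
  | cons b bs ih =>
    cases t with
    | zero => cases P <;> simp [pushColumn]
    | succ t => rw [pushColumn, List.getD_cons_succ, ih]; cases P <;> simp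

theorem insertTab_cons_of_forall_lt {p : List ℕ} {b : ℕ} (P : List (List ℕ))
    (hp : ∀ x ∈ p, x < b) : insertTab (p :: P) b = (p ++ [b]) :: P := by
  have : p.findIdx? (fun y => decide (b < y)) = none :=
    List.findIdx?_eq_none_iff.2 fun x hx => by simpa using (hp x hx).le
  simp [insertTab, this]

theorem insertTab_append_singleton_cons {p : List ℕ} {b c : ℕ} (P : List (List ℕ))
    (hp : ∀ x ∈ p, x < b) (hbc : b < c) :
    insertTab ((p ++ [c]) :: P) b = (p ++ [b]) :: insertTab P c := by
  have hnone : p.findIdx? (fun y => decide (b < y)) = none :=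
    List.findIdx?_eq_none_iff.2 fun x hx => by simpa using (hp x hx).le
  have : (p ++ [c]).findIdx? (fun y => decide (b < y)) = some p.length := by
    simp [List.findIdx?_append, hnone, hbc]
  simp [insertTab, this]

def RowsBoundedBy (P : List (List ℕ)) (bs : List ℕ) : Prop :=
  ∀ t (ht : t < bs.length), ∀ x ∈ P.getD t [], x < bs[t]

theorem RowsBoundedBy.tail {P : List (List ℕ)} {b : ℕ} {bs : List ℕ} (h : RowsBoundedBy P (b :: bs)) :
    RowsBoundedBy P.tail bs := by
  intro t ht x hx
  have hx' : x ∈ P.getD (t + 1) [] := by cases P <;> simp_all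
  exact h (t + 1) (by simpa using ht) x hx'

theorem RowsBoundedBy.headD {P : List (List ℕ)} {b : ℕ} {bs : List ℕ} (h : RowsBoundedBy P (b :: bs)) :
    ∀ x ∈ P.headD [], x < b := fun x hx =>
  h 0 (by simp) x (by cases P <;> simp_all)

theorem insertTab_pushColumn (P : List (List ℕ)) (b : ℕ) (cs : List ℕ)
    (hsorted : (b :: cs).Pairwise (· < ·)) (hP : RowsBoundedBy P (b :: cs)) :
    insertTab (pushColumn P cs) b = pushColumn P (b :: cs) := by
  induction cs generalizing P b with
  | nil =>
    cases P with
    | nil => rfl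
    | cons p P => exact insertTab_cons_of_forall_lt P hP.headD
  | cons c cs ih =>
    obtain ⟨hbc, hcs⟩ := List.pairwise_cons.1 hsorted
    rw [pushColumn, insertTab_append_singleton_cons _ hP.headD (hbc c (by simp)),
      ih P.tail c hcs hP.tail]
    rfl

theorem foldl_insertTab_reverse_s15 (P : List (List ℕ)) (bs : List ℕ)
    (hsorted : bs.Pairwise (· < ·)) (hP : RowsBoundedBy P bs) :
    bs.reverse.foldl insertTab P = pushColumn P bs := by
  induction bs with
  | nil => rfl
  | cons b cs ih =>
    have hcs : RowsBoundedBy P cs := fun t ht x hx =>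
      (hP t (by simp; omega) x hx).trans <|
        List.pairwise_iff_getElem.1 hsorted t (t + 1) _ (by simpa using ht) (by omega)
    rw [List.reverse_cons, List.foldl_append, ih hsorted.of_cons hcs, List.foldl_cons,
      List.foldl_nil, insertTab_pushColumn P b cs hsorted hP]

theorem mem_getD_transposeTab {T : List (List ℕ)} {t x : ℕ}
    (hx : x ∈ (transposeTab T).getD t []) : ∃ row ∈ T, row[t]? = some x := by
  by_cases ht : t < (transposeTab T).length
  · rw [List.getD_eq_getElem _ _ ht] at hx
    simpa [transposeTab] using hx
  · rw [List.getD_eq_default _ _ (not_lt.1 ht)] at hx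
    simp at hx

theorem filterMap_getElem?_append_singleton (T : List (List ℕ)) (bs : List ℕ) (t : ℕ) :
    (T ++ [bs]).filterMap (·[t]?) = T.filterMap (·[t]?) ++ bs[t]?.toList := by
  rw [List.filterMap_append]
  cases h : bs[t]? <;> simp [h]

theorem transposeTab_append_singleton (T : List (List ℕ)) (bs : List ℕ)
    (h : T = [] ∨ bs.length ≤ (T.headD []).length) :
    transposeTab (T ++ [bs]) = pushColumn (transposeTab T) bs := by
  have hlen : (transposeTab (T ++ [bs])).length = (pushColumn (transposeTab T) bs).length := by
    rcases T with _ | ⟨p, T⟩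
    · simp [transposeTab, length_pushColumn]
    · simpa [transposeTab, length_pushColumn] using h
  refine List.ext_getElem hlen fun t h₁ h₂ => ?_
  have hcol : (transposeTab T).getD t [] = T.filterMap (·[t]?) := by
    rcases T with _ | ⟨p, T⟩
    · simp [transposeTab]
    · have ht : t < p.length := by simpa [transposeTab] using h₁
      simp [transposeTab, ht]
  rw [← List.getD_eq_getElem _ [] h₂, getD_pushColumn, hcol,
    ← filterMap_getElem?_append_singleton]
  simp [transposeTab]

def RowBelow (lower upper : List ℕ) : Prop :=
  upper.length ≤ lower.length ∧
    ∀ t (h₁ : t < lower.length) (h₂ : t < upper.length), lower[t] < upper[t]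

instance : Trans RowBelow RowBelow RowBelow where
  trans hab hbc := ⟨hbc.1.trans hab.1, fun t ha hc =>
    (hab.2 t ha (hc.trans_le hbc.1)).trans (hbc.2 t _ hc)⟩

theorem insertWord_append (u v : List ℕ) :
    insertWord (u ++ v) = v.foldl insertTab (insertWord u) :=
  List.foldl_append

theorem insertWord_flatten_map_reverse (T : List (List ℕ))
    (hrows : ∀ row ∈ T, row.Pairwise (· < ·)) (hcols : T.Pairwise RowBelow) :
    insertWord (T.map List.reverse).flatten = transposeTab T := by
  induction T using List.reverseRecOn with
  | nil => rfl
  | append_singleton T bs ih =>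
    obtain ⟨hT, -, hbs⟩ := List.pairwise_append.1 hcols
    have hbelow : RowsBoundedBy (transposeTab T) bs := fun t ht x hx => by
      obtain ⟨row, hrow, hx⟩ := mem_getD_transposeTab hx
      obtain ⟨htr, rfl⟩ := List.getElem?_eq_some_iff.1 hx
      exact (hbs row hrow bs (by simp)).2 t htr ht
    have hshort : T = [] ∨ bs.length ≤ (T.headD []).length := by
      cases T with
      | nil => exact .inl rfl
      | cons p T => exact .inr (hbs p (by simp) bs (by simp)).1
    rw [List.map_append, List.flatten_append, insertWord_append,
      ih (fun row hrow => hrows row (by simp [hrow])) hT, List.map_singleton,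
      List.flatten_singleton, foldl_insertTab_reverse_s15 _ _ (hrows bs (by simp)) hbelow,
      transposeTab_append_singleton T bs hshort]

theorem IsSYT.pairwise_rowBelow {T : List (List ℕ)} (hT : IsSYT T) : T.Pairwise RowBelow := by
  refine List.isChain_iff_pairwise.1 (List.isChain_iff_getElem.2 fun i hi => ⟨?_, ?_⟩)
  · simpa [shape] using List.pairwise_iff_getElem.1 hT.1.1 i (i + 1) (by simp [shape]; omega)
      (by simpa [shape] using hi) (by omega)
  · intro t h₁ h₂
    have hcol := hT.2.2.1 i t hi (by rwa [List.getD_eq_getElem _ _ hi])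
    rwa [List.getD_eq_getElem _ _ hi, List.getD_eq_getElem _ _ (by omega : i < T.length),
      List.getD_eq_getElem _ _ h₁, List.getD_eq_getElem _ _ h₂] at hcol

theorem RSK_fst (w : List ℕ) : (RSK w).1 = insertWord w := by
  suffices ∀ k P Q, (RSKaux w k (P, Q)).1 = w.foldl insertTab P from this 1 [] []
  induction w with
  | nil => exact fun _ _ _ => rfl
  | cons a w ih => exact fun _ _ _ => ih _ _ _

end RSKPaper

open RSKPaper in
theorem insert_reversed_readingWord_general (T : List (List ℕ))
    (hT : IsSYT T) :
    (RSK (readingWord T).reverse).1 = transposeTab T := by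
  rw [RSK_fst, readingWord, List.reverse_flatten, List.map_reverse, List.reverse_reverse]
  exact insertWord_flatten_map_reverse T hT.2.1 hT.pairwise_rowBelow

open RSKPaper in
/-- Inserting the reversed row reading word of a standard Young tableau `T`
yields the transposed tableau `T'` as insertion tableau. -/
theorem insert_reversed_readingWord (T : List (List ℕ)) (lam : List ℕ)
    (hT : IsSYT T) (hshape : shape T = lam) :
    (RSK (readingWord T).reverse).1 = transposeTab T :=
  insert_reversed_readingWord_general T hT
end

section
/- Let T be a standard Young tableau of shape λ' with row reading word w, and let w' be the reversal of w. Then the recording tableau of RSK applied to w' equals Q_λ, the tableau of shape λ whose columns are filled consecutively with 1,2,...,n from bottom to top, left to right. In particular, the recording tableau depends only on the shape λ'. -/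
/-! Write `R₁, …, R_m` for the rows of `T`, bottom to top; the reversed reading word lists
`R₁` backwards, then `R₂` backwards, and so on. Because the columns of `T` increase, inserting
`R_j` backwards into the tableau whose columns are `R₁, …, R_{j-1}` just appends `R_j` as a new
rightmost column: each letter bumps the partial new column one row up. So the insertion shape
grows one whole column at a time, of length `|R_j| = λ_j'`, and the recording tableau receives
consecutive labels column by column, which is `Q_λ`. -/

namespace RSKPaper

/-- Appends `S` to `P` as a new rightmost column: `S[i]` goes at the end of row `i`. -/
def addColumn (P : List (List ℕ)) : List ℕ → List (List ℕ)
  | [] => P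
  | a :: S => (P.headD [] ++ [a]) :: addColumn P.tail S

def RowwiseLT (P : List (List ℕ)) : List ℕ → Prop
  | [] => True
  | a :: S => (∀ b ∈ P.headD [], b < a) ∧ RowwiseLT P.tail S

def StrictlyBelow : List ℕ → List ℕ → Prop
  | _, [] => True
  | [], _ :: _ => False
  | r :: R, s :: S => r < s ∧ StrictlyBelow R S

@[simp] lemma addColumn_nil (P : List (List ℕ)) : addColumn P [] = P := rfl

@[simp] lemma addColumn_cons (P : List (List ℕ)) (a : ℕ) (S : List ℕ) :
    addColumn P (a :: S) = (P.headD [] ++ [a]) :: addColumn P.tail S := rfl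

lemma getD_addColumn (P : List (List ℕ)) (S : List ℕ) (i : ℕ) :
    (addColumn P S).getD i [] = P.getD i [] ++ S[i]?.toList := by
  induction S generalizing P i with
  | nil => simp
  | cons a S ih =>
    cases i with
    | zero => cases P <;> simp
    | succ i =>
      rw [addColumn_cons, List.getD_cons_succ, ih]
      simp [List.getD_eq_getElem?_getD]

lemma length_addColumn (P : List (List ℕ)) (S : List ℕ) :
    (addColumn P S).length = max P.length S.length := by
  induction S generalizing P with
  | nil => simp
  | cons a S ih => cases P <;> simp [ih]

lemma getD_foldl_addColumn (cols P : List (List ℕ)) (i : ℕ) :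
    (cols.foldl addColumn P).getD i [] = P.getD i [] ++ cols.filterMap (·[i]?) := by
  induction cols generalizing P with
  | nil => simp
  | cons c cols ih =>
    rw [List.foldl_cons, ih, getD_addColumn, List.filterMap_cons]
    split <;> simp [*]

lemma lt_length_foldl_addColumn_iff (cols P : List (List ℕ)) (i : ℕ) :
    i < (cols.foldl addColumn P).length ↔ i < P.length ∨ ∃ c ∈ cols, i < c.length := by
  induction cols generalizing P with
  | nil => simp
  | cons c cols ih => simp [ih, length_addColumn, or_assoc]

lemma rowwiseLT_nil (S : List ℕ) : RowwiseLT [] S := by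
  induction S with
  | nil => trivial
  | cons a S ih => exact ⟨by simp, ih⟩

lemma RowwiseLT.of_cons {P : List (List ℕ)} {a : ℕ} {S : List ℕ}
    (hsort : (a :: S).Pairwise (· < ·)) (h : RowwiseLT P (a :: S)) : RowwiseLT P S := by
  induction S generalizing P a with
  | nil => trivial
  | cons s S ih =>
    obtain ⟨has, -⟩ := List.pairwise_cons.mp hsort
    obtain ⟨hPa, hPs, hrest⟩ := h
    exact ⟨fun b hb => (hPa b hb).trans (has s (by simp)),
      ih (List.pairwise_cons.mp hsort).2 ⟨hPs, hrest⟩⟩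

lemma RowwiseLT.of_append {P : List (List ℕ)} {Z S : List ℕ}
    (hsort : (Z ++ S).Pairwise (· < ·)) (h : RowwiseLT P (Z ++ S)) : RowwiseLT P S := by
  induction Z with
  | nil => exact h
  | cons z Z ih => exact ih (List.pairwise_cons.mp hsort).2 (h.of_cons hsort)

lemma RowwiseLT.addColumn {P : List (List ℕ)} {R S : List ℕ}
    (h : RowwiseLT P S) (hRS : StrictlyBelow R S) : RowwiseLT (addColumn P R) S := by
  induction S generalizing P R with
  | nil => trivial
  | cons s S ih =>
    cases R with
    | nil => exact hRS.elim
    | cons r R =>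
      obtain ⟨hPs, hrest⟩ := h
      obtain ⟨hrs, hRS⟩ := hRS
      refine ⟨?_, ih hrest hRS⟩
      intro b hb
      simp only [addColumn_cons, List.headD_cons, List.mem_append, List.mem_singleton] at hb
      exact hb.elim (hPs b) (· ▸ hrs)

@[simp] lemma strictlyBelow_nil (R : List ℕ) : StrictlyBelow R [] := by
  cases R <;> trivial

lemma StrictlyBelow.trans {R S U : List ℕ} (hRS : StrictlyBelow R S) (hSU : StrictlyBelow S U) :
    StrictlyBelow R U := by
  induction U generalizing R S with
  | nil => exact strictlyBelow_nil R
  | cons u U ih =>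
    cases S with
    | nil => exact hSU.elim
    | cons s S =>
      cases R with
      | nil => exact hRS.elim
      | cons r R => exact ⟨hRS.1.trans hSU.1, ih hRS.2 hSU.2⟩

instance : Trans StrictlyBelow StrictlyBelow StrictlyBelow := ⟨StrictlyBelow.trans⟩

lemma strictlyBelow_iff {R S : List ℕ} :
    StrictlyBelow R S ↔ S.length ≤ R.length ∧ ∀ i < S.length, R.getD i 0 < S.getD i 0 := by
  induction S generalizing R with
  | nil => simp
  | cons s S ih =>
    cases R with
    | nil => simp [StrictlyBelow]
    | cons r R =>
      simp only [StrictlyBelow, ih, List.length_cons, Nat.add_le_add_iff_right,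
        Nat.forall_lt_succ_left', List.getD_cons_zero, List.getD_cons_succ]
      tauto

lemma findIdx?_lt_eq_none {q : List ℕ} {a : ℕ} (h : ∀ b ∈ q, b < a) :
    q.findIdx? (fun b => decide (a < b)) = none := by
  simpa [List.findIdx?_eq_none_iff] using fun b hb => (h b hb).le

lemma insertTab_addColumn {P : List (List ℕ)} {a : ℕ} {S : List ℕ}
    (hsort : (a :: S).Pairwise (· < ·)) (h : RowwiseLT P (a :: S)) :
    insertTab (addColumn P S) a = addColumn P (a :: S) := by
  induction S generalizing P a with
  | nil =>
    cases P with
    | nil => rfl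
    | cons q P => simp [insertTab, findIdx?_lt_eq_none (q := q) h.1]
  | cons s S ih =>
    obtain ⟨has, hsort⟩ := List.pairwise_cons.mp hsort
    have hfind : (P.headD [] ++ [s]).findIdx? (fun b => decide (a < b))
        = some (P.headD []).length := by
      rw [List.findIdx?_append, findIdx?_lt_eq_none h.1]
      simp [has]
    rw [addColumn_cons, insertTab, hfind]
    dsimp only
    rw [List.getD_eq_getElem?_getD, List.getElem?_concat_length, Option.getD_some, ih hsort h.2,
      List.set_append_right _ _ le_rfl]
    simp

lemma growthRow_addColumn_cons (P : List (List ℕ)) (a : ℕ) (S : List ℕ) :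
    growthRow (addColumn P S) (addColumn P (a :: S)) = S.length := by
  have hlen : S.length < (addColumn P (a :: S)).length := by
    rw [length_addColumn, List.length_cons]; omega
  rw [growthRow, List.findIdx_eq (by simpa using hlen)]
  refine ⟨?_, fun j hj => ?_⟩ <;>
    simp only [List.getElem_range, getD_addColumn, List.length_append, Option.length_toList]
  · simp
  · simp [List.getElem?_eq_getElem hj, hj.le]

lemma addBox_cons_succ (q : List ℕ) (Q : List (List ℕ)) (i k : ℕ) :
    addBox (q :: Q) (i + 1) k = q :: addBox Q i k := by
  by_cases h : i < Q.length <;> simp [addBox, h]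

lemma addBox_addColumn (Q : List (List ℕ)) (L : List ℕ) (k : ℕ) :
    addBox (addColumn Q L) L.length k = addColumn Q (L ++ [k]) := by
  induction L generalizing Q with
  | nil => cases Q <;> simp [addBox]
  | cons a L ih => simp [addBox_cons_succ, ih]

lemma RSKaux_append (u v : List ℕ) (k : ℕ) (PQ : List (List ℕ) × List (List ℕ)) :
    RSKaux (u ++ v) k PQ = RSKaux v (k + u.length) (RSKaux u k PQ) := by
  induction u generalizing k PQ with
  | nil => rfl
  | cons a u ih =>
    obtain ⟨P, Q⟩ := PQ
    rw [List.cons_append, RSKaux, RSKaux, ih, List.length_cons, Nat.add_right_comm, Nat.add_assoc]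

lemma RSKaux_addColumn (W S L : List ℕ) (P Q : List (List ℕ)) (k : ℕ)
    (hL : L.length = S.length) (hsort : (W.reverse ++ S).Pairwise (· < ·))
    (hP : RowwiseLT P (W.reverse ++ S)) :
    RSKaux W k (addColumn P S, addColumn Q L) =
      (addColumn P (W.reverse ++ S), addColumn Q (L ++ List.range' k W.length)) := by
  induction W generalizing S L k with
  | nil => simp [RSKaux]
  | cons a W ih =>
    rw [List.reverse_cons, List.append_assoc, List.singleton_append] at hsort hP ⊢
    have hcol := insertTab_addColumn (hsort.sublist (List.sublist_append_right _ _))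
      (hP.of_append hsort)
    rw [RSKaux, hcol, growthRow_addColumn_cons, ← hL, addBox_addColumn,
      ih _ _ _ (by simp [hL]) hsort hP, List.length_cons, List.range'_succ, List.append_assoc,
      List.singleton_append]

def consecutiveBlocks : ℕ → List ℕ → List (List ℕ)
  | _, [] => []
  | k, n :: l => List.range' k n :: consecutiveBlocks (k + n) l

lemma RSKaux_flatten_map_reverse (Ts P Q : List (List ℕ)) (k : ℕ)
    (hbelow : Ts.Pairwise StrictlyBelow) (hsort : ∀ R ∈ Ts, R.Pairwise (· < ·))
    (hP : ∀ R ∈ Ts, RowwiseLT P R) :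
    RSKaux (Ts.map List.reverse).flatten k (P, Q) =
      (Ts.foldl addColumn P, (consecutiveBlocks k (shape Ts)).foldl addColumn Q) := by
  induction Ts generalizing P Q k with
  | nil => rfl
  | cons R Ts ih =>
    obtain ⟨hR, hbelow⟩ := List.pairwise_cons.mp hbelow
    have hrow := RSKaux_addColumn R.reverse [] [] P Q k rfl
      (by simpa using hsort R (by simp)) (by simpa using hP R (by simp))
    simp only [addColumn_nil, List.append_nil, List.reverse_reverse, List.length_reverse] at hrow
    rw [List.map_cons, List.flatten_cons, RSKaux_append, hrow, List.length_reverse,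
      ih _ _ _ hbelow (fun R' hR' => hsort R' (by simp [hR']))
        (fun R' hR' => (hP R' (by simp [hR'])).addColumn (hR R' hR'))]
    rfl

lemma consecutiveBlocks_eq_map_range (k : ℕ) (l : List ℕ) :
    consecutiveBlocks k l = (List.range l.length).map
      (fun j => (List.range (l.getD j 0)).map (fun i => (l.take j).sum + i + k)) := by
  induction l generalizing k with
  | nil => rfl
  | cons n l ih =>
    rw [consecutiveBlocks, ih, List.length_cons, List.range_succ_eq_map, List.map_cons,
      List.map_map, List.range'_eq_map_range]
    congr 1
    · simp only [List.take_zero, List.sum_nil, List.getD_cons_zero]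
      exact List.map_congr_left fun i _ => by omega
    · refine List.map_congr_left fun j _ => List.map_congr_left fun i _ => ?_
      simp only [List.take_succ_cons, List.sum_cons]
      omega

lemma map_length_consecutiveBlocks (k : ℕ) (l : List ℕ) :
    (consecutiveBlocks k l).map List.length = l := by
  induction l generalizing k with
  | nil => rfl
  | cons n l ih => simp [consecutiveBlocks, ih]

lemma foldl_addColumn_nil_eq_rowsOfCols (cols : List (List ℕ)) (K : ℕ)
    (hK : ∀ i, i < K ↔ ∃ n ∈ cols.map List.length, i < n) :
    cols.foldl addColumn [] = rowsOfCols cols K := by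
  have hlen : (cols.foldl addColumn []).length = K :=
    eq_of_forall_lt_iff fun i => by simp [lt_length_foldl_addColumn_iff, hK]
  apply List.ext_getElem (by simp [rowsOfCols, hlen])
  intro i hi _
  rw [← List.getD_eq_getElem _ [] hi, getD_foldl_addColumn]
  simp [rowsOfCols]

lemma lt_length_iff_exists_lt_conj {l : List ℕ} (hpos : ∀ x ∈ l, 0 < x) (i : ℕ) :
    i < l.length ↔ ∃ n ∈ conj l, i < n := by
  simp only [conj, List.mem_map, List.mem_range, exists_exists_and_eq_and]
  constructor
  · intro hi
    obtain ⟨x, l', rfl⟩ := List.exists_cons_of_length_pos (Nat.zero_lt_of_lt hi)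
    refine ⟨0, hpos x (by simp), ?_⟩
    rwa [List.countP_eq_length.mpr fun y hy => by simpa using hpos y hy]
  · rintro ⟨j, -, hj⟩
    exact hj.trans_le List.countP_le_length

lemma IsSYT.pairwise_strictlyBelow {T : List (List ℕ)} (hT : IsSYT T) :
    T.Pairwise StrictlyBelow := by
  obtain ⟨⟨hshape, -⟩, -, hcols, -⟩ := hT
  refine (List.isChain_iff_getElem.mpr fun i hi =>
    strictlyBelow_iff.mpr ⟨?_, fun j hj => ?_⟩).pairwise
  · have := List.pairwise_iff_getElem.mp hshape i (i + 1) (by simp [shape]; omega)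
      (by simpa [shape] using hi) (Nat.lt_succ_self i)
    simpa [shape] using this
  · have := hcols i j hi (by rwa [List.getD_eq_getElem _ _ hi])
    rwa [List.getD_eq_getElem _ _ hi, List.getD_eq_getElem _ _ (Nat.lt_of_succ_lt hi)] at this

lemma RSK_reverse_readingWord {T : List (List ℕ)} (hT : IsSYT T) :
    (RSK (readingWord T).reverse).2 = (consecutiveBlocks 1 (shape T)).foldl addColumn [] := by
  have hword : (readingWord T).reverse = (T.map List.reverse).flatten := by
    rw [readingWord, List.reverse_flatten, List.map_reverse, List.reverse_reverse]
  rw [RSK, hword, RSKaux_flatten_map_reverse T [] [] 1 hT.pairwise_strictlyBelow hT.2.1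
    fun R _ => rowwiseLT_nil R]

end RSKPaper

open RSKPaper in
/-- The recording tableau of the reversed row reading word of a standard Young
tableau of shape `λ'` is `Q_λ`; in particular it depends only on the shape. -/
theorem recording_of_reversed_readingWord (T : List (List ℕ)) (lam : List ℕ)
    (hT : IsSYT T) (hshape : shape T = conj lam) (hlam : IsPartitionList lam) :
    (RSK (readingWord T).reverse).2 = Qlam lam := by
  rw [RSK_reverse_readingWord hT, hshape, Qlam, ← consecutiveBlocks_eq_map_range]
  refine foldl_addColumn_nil_eq_rowsOfCols _ _ fun i => ?_
  rw [map_length_consecutiveBlocks]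
  exact lt_length_iff_exists_lt_conj hlam.2 i
end
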